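/- arXiv:1910.02854 — 2 statements merged into one kernel-verified Lean document; each statement's English description precedes it below -/
import Mathlib

section
/- Energy identity for the homogeneous radial ODE with spin 0 (Proposition 2.13): Fix M > 0, a with |a| ≤ M, m ∈ ℝ, λ ∈ ℝ and ω ∈ ℝ∖{0} with ω ≠ mω₊. Define the real potential V⁰(r) := [Δ(λ + a²ω²) + 4Mamωr − a²m²]/(r²+a²)² + Δ(a²Δ + 2Mr(r²−a²))/(r²+a²)⁴ and the operator D* := (Δ/(r²+a²))·d/dr. Define χ₊(r) := (r−r₊)^{ξ} and χ₋(r) := (r−r₊)^{−ξ} when |a| < M (with ξ := −2iMr₊(ω − mω₊)/(r₊ − r₋)), χ₊(r) := e^{β/(r−M)}(r−M)^{2iMω} and χ₋(r) := e^{−β/(r−M)}(r−M)^{−2iMω} when |a| = M (with β := 2iM²(ω − mω₊)), and ψ±(r) := e^{±iωr} r^{±2iMω}. Suppose u : (r₊, ∞) → ℂ is twice continuously differentiable with (D*)²u + (ω² − V⁰)u = 0, and that there exist complex numbers a_{H+}, a_{H−}, a_{I+}, a_{I−} such that, as r → r₊⁺, u − a_{H+}χ₊ − a_{H−}χ₋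 → 0 and D*u − a_{H+}D*χ₊ − a_{H−}D*χ₋ → 0, and, as r → ∞, u − a_{I+}ψ₊ − a_{I−}ψ₋ → 0 and D*u − a_{I+}D*ψ₊ − a_{I−}D*ψ₋ → 0. Then ω²|a_{I+}|² + ω(ω − mω₊)|a_{H+}|² = ω²|a_{I−}|² + ω(ω − mω₊)|a_{H−}|². -/
open Real Complex Filter Set MeasureTheory Asymptotics

noncomputable section

/-- `r₊ = M + √(M² − a²)`. -/
def rPlus (M a : ℝ) : ℝ := M + Real.sqrt (M ^ 2 - a ^ 2)

/-- `r₋ = M − √(M² − a²)`. -/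
def rMinus (M a : ℝ) : ℝ := M - Real.sqrt (M ^ 2 - a ^ 2)

/-- `Δ(r) = (r − r₊)(r − r₋)`. -/
def Delta (M a r : ℝ) : ℝ := (r - rPlus M a) * (r - rMinus M a)

/-- `ω₊ = a/(2Mr₊)`. -/
def omegaPlus (M a : ℝ) : ℝ := a / (2 * M * rPlus M a)

/-- `ξ = −2iMr₊(ω − mω₊)/(r₊ − r₋)`. -/
def xiParam (M a : ℝ) (ω : ℂ) (m : ℝ) : ℂ :=
  -2 * Complex.I * (M : ℂ) * (rPlus M a : ℂ) * (ω - (m : ℂ) * (omegaPlus M a : ℂ)) /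
    ((rPlus M a : ℂ) - (rMinus M a : ℂ))

/-- `β = 2iM²(ω − mω₊)`. -/
def betaParam (M a : ℝ) (ω : ℂ) (m : ℝ) : ℂ :=
  2 * Complex.I * (M : ℂ) ^ 2 * (ω - (m : ℂ) * (omegaPlus M a : ℂ))

/-- The homogeneous radial Teukolsky ODE with spin `s` and parameters `(ω, m, λ)`:
`Δ^{−s}(d/dr)(Δ^{s+1} dR/dr) + [((ω(r²+a²) − am)² − 2is(r−M)(ω(r²+a²) − am))/Δ
  + 4isωr − λ − a²ω² + 2amω] R = 0` on `(r₊, ∞)`. -/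
def RadialTeukolskyODE (M a s : ℝ) (ω lam : ℂ) (m : ℝ) (R : ℝ → ℂ) : Prop :=
  ∀ r : ℝ, rPlus M a < r →
    (Delta M a r : ℂ) ^ (-(s : ℂ)) *
        deriv (fun r' : ℝ => (Delta M a r' : ℂ) ^ ((s : ℂ) + 1) * deriv R r') r
      + (((ω * ((r : ℂ) ^ 2 + (a : ℂ) ^ 2) - (a : ℂ) * (m : ℂ)) ^ 2
              - 2 * Complex.I * (s : ℂ) * ((r : ℂ) - (M : ℂ)) *
                (ω * ((r : ℂ) ^ 2 + (a : ℂ) ^ 2) - (a : ℂ) * (m : ℂ))) /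
            (Delta M a r : ℂ)
          + 4 * Complex.I * (s : ℂ) * ω * (r : ℂ) - lam - (a : ℂ) ^ 2 * ω ^ 2
          + 2 * (a : ℂ) * (m : ℂ) * ω) * R r
      = 0

/-- Outgoing boundary condition at the horizon: in the subextremal case `|a| < M`,
`(r − r₊)^{s−ξ} R(r)` extends smoothly to `r = r₊`; in the extremal case `|a| = M`,
`(r − M)^{2iMω+2s} e^{−β/(r−M)} R(r)` extends smoothly to `r = M`. -/
def OutgoingAtHorizon (M a s : ℝ) (ω : ℂ) (m : ℝ) (R : ℝ → ℂ) : Prop :=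
  (|a| < M →
    ∃ g : ℝ → ℂ, ContDiffOn ℝ (⊤ : ℕ∞) g (Set.Ici (rPlus M a)) ∧
      ∀ r : ℝ, rPlus M a < r →
        g r = ((r : ℂ) - (rPlus M a : ℂ)) ^ ((s : ℂ) - xiParam M a ω m) * R r) ∧
  (|a| = M →
    ∃ g : ℝ → ℂ, ContDiffOn ℝ (⊤ : ℕ∞) g (Set.Ici M) ∧
      ∀ r : ℝ, M < r →
        g r = ((r : ℂ) - (M : ℂ)) ^ (2 * Complex.I * (M : ℂ) * ω + 2 * (s : ℂ)) *
            Complex.exp (-betaParam M a ω m / ((r : ℂ) - (M : ℂ))) * R r)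

/-- Outgoing boundary condition at infinity, with the asymptotic expansion coefficients `c`:
for every `N`, `e^{−iωr} r^{−2iMω} R(r) − Σ_{k=0}^{N} c_k r^{−2s−k−1} = O(r^{−2s−N−2})`
as `r → ∞`. -/
def OutgoingAtInfinityWith (M s : ℝ) (ω : ℂ) (c : ℕ → ℂ) (R : ℝ → ℂ) : Prop :=
  ∀ N : ℕ,
    (fun r : ℝ =>
        Complex.exp (-(Complex.I * ω * (r : ℂ))) *
            (r : ℂ) ^ (-(2 * Complex.I * (M : ℂ) * ω)) * R r
          - ∑ k ∈ Finset.range (N + 1), c k * ((r ^ (-2 * s - (k : ℝ) - 1) : ℝ) : ℂ))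
      =O[atTop] fun r : ℝ => r ^ (-2 * s - (N : ℝ) - 2)

/-- Outgoing boundary condition at infinity. -/
def OutgoingAtInfinity (M s : ℝ) (ω : ℂ) (R : ℝ → ℂ) : Prop :=
  ∃ c : ℕ → ℂ, OutgoingAtInfinityWith M s ω c R

/-- The spin-0 potential
`V⁰(r) = [Δ(λ + a²ω²) + 4Mamωr − a²m²]/(r²+a²)² + Δ(a²Δ + 2Mr(r²−a²))/(r²+a²)⁴`. -/
def V0 (M a ω m lam : ℝ) (r : ℝ) : ℝ :=
  (Delta M a r * (lam + a ^ 2 * ω ^ 2) + 4 * M * a * m * ω * r - a ^ 2 * m ^ 2) /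
      (r ^ 2 + a ^ 2) ^ 2
    + Delta M a r * (a ^ 2 * Delta M a r + 2 * M * r * (r ^ 2 - a ^ 2)) /
      (r ^ 2 + a ^ 2) ^ 4

/-- The Regge–Wheeler-type derivative `D* = (Δ/(r²+a²))·d/dr`. -/
def Dstar (M a : ℝ) (f : ℝ → ℂ) (r : ℝ) : ℂ :=
  ((Delta M a r / (r ^ 2 + a ^ 2) : ℝ) : ℂ) * deriv f r

/-- `χ₊(r) = (r−r₊)^{ξ}` when `|a| < M`; `χ₊(r) = e^{β/(r−M)}(r−M)^{2iMω}` when `|a| = M`. -/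
def chiPlus (M a ω m : ℝ) (r : ℝ) : ℂ :=
  if |a| < M then ((r : ℂ) - (rPlus M a : ℂ)) ^ xiParam M a (ω : ℂ) m
  else
    Complex.exp (betaParam M a (ω : ℂ) m / ((r : ℂ) - (M : ℂ))) *
      ((r : ℂ) - (M : ℂ)) ^ (2 * Complex.I * (M : ℂ) * (ω : ℂ))

/-- `χ₋(r) = (r−r₊)^{−ξ}` when `|a| < M`; `χ₋(r) = e^{−β/(r−M)}(r−M)^{−2iMω}` when `|a| = M`. -/
def chiMinus (M a ω m : ℝ) (r : ℝ) : ℂ :=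
  if |a| < M then ((r : ℂ) - (rPlus M a : ℂ)) ^ (-xiParam M a (ω : ℂ) m)
  else
    Complex.exp (-betaParam M a (ω : ℂ) m / ((r : ℂ) - (M : ℂ))) *
      ((r : ℂ) - (M : ℂ)) ^ (-(2 * Complex.I * (M : ℂ) * (ω : ℂ)))

/-- `ψ₊(r) = e^{iωr} r^{2iMω}`. -/
def psiPlus (M ω : ℝ) (r : ℝ) : ℂ :=
  Complex.exp (Complex.I * (ω : ℂ) * (r : ℂ)) * (r : ℂ) ^ (2 * Complex.I * (M : ℂ) * (ω : ℂ))

/-- `ψ₋(r) = e^{−iωr} r^{−2iMω}`. -/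
def psiMinus (M ω : ℝ) (r : ℝ) : ℂ :=
  Complex.exp (-(Complex.I * (ω : ℂ) * (r : ℂ))) *
    (r : ℂ) ^ (-(2 * Complex.I * (M : ℂ) * (ω : ℂ)))


/-! ### Auxiliary material for the proof -/

local notation "conj'" => starRingEnd ℂ

section Prelim
variable {M a : ℝ}

lemma sq_le'' (hM : 0 < M) (ha : |a| ≤ M) : a ^ 2 ≤ M ^ 2 := by
  have := abs_nonneg a
  nlinarith [_root_.sq_abs a]

lemma rPlus_pos (hM : 0 < M) (ha : |a| ≤ M) : 0 < rPlus M a := by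
  have := Real.sqrt_nonneg (M ^ 2 - a ^ 2); unfold rPlus; linarith

lemma rMinus_le_rPlus' : rMinus M a ≤ rPlus M a := by
  have := Real.sqrt_nonneg (M ^ 2 - a ^ 2); unfold rPlus rMinus; linarith

lemma Delta_eq (hM : 0 < M) (ha : |a| ≤ M) (r : ℝ) :
    Delta M a r = r ^ 2 - 2 * M * r + a ^ 2 := by
  have h : Real.sqrt (M ^ 2 - a ^ 2) ^ 2 = M ^ 2 - a ^ 2 :=
    Real.sq_sqrt (by nlinarith [sq_le'' hM ha])
  unfold Delta rPlus rMinus; nlinarith [h]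

lemma rPlus_sq (hM : 0 < M) (ha : |a| ≤ M) :
    rPlus M a ^ 2 + a ^ 2 = 2 * M * rPlus M a := by
  have h : Real.sqrt (M ^ 2 - a ^ 2) ^ 2 = M ^ 2 - a ^ 2 :=
    Real.sq_sqrt (by nlinarith [sq_le'' hM ha])
  unfold rPlus; nlinarith [h]

lemma Delta_pos (hM : 0 < M) (ha : |a| ≤ M) {r : ℝ} (hr : rPlus M a < r) :
    0 < Delta M a r := by
  have := rMinus_le_rPlus' (M := M) (a := a)
  unfold Delta; nlinarith

lemma rsq_pos (hM : 0 < M) (ha : |a| ≤ M) {r : ℝ} (hr : rPlus M a < r) :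
    0 < r ^ 2 + a ^ 2 := by
  have := rPlus_pos hM ha; nlinarith

lemma sqrt_pos_sub (hM : 0 < M) (hsub : |a| < M) : 0 < Real.sqrt (M ^ 2 - a ^ 2) := by
  apply Real.sqrt_pos.2
  have := abs_nonneg a
  nlinarith [_root_.sq_abs a]

lemma rMinus_lt_rPlus (hM : 0 < M) (hsub : |a| < M) : rMinus M a < rPlus M a := by
  have := sqrt_pos_sub hM hsub; unfold rPlus rMinus; linarith

lemma rPlus_ext (hext : |a| = M) : rPlus M a = M := by
  unfold rPlus
  rw [show M ^ 2 - a ^ 2 = 0 by rw [← _root_.sq_abs a, hext]; ring, Real.sqrt_zero, add_zero]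

lemma rMinus_ext (hext : |a| = M) : rMinus M a = M := by
  unfold rMinus
  rw [show M ^ 2 - a ^ 2 = 0 by rw [← _root_.sq_abs a, hext]; ring, Real.sqrt_zero, sub_zero]

lemma not_lt_ext (hext : |a| = M) : ¬ (|a| < M) := by rw [hext]; exact lt_irrefl M

lemma asq_ext (hext : |a| = M) : a ^ 2 = M ^ 2 := by rw [← _root_.sq_abs a, hext]

end Prelim

section CpowHelpers

lemma conj_cpow_pos {x : ℝ} (hx : 0 < x) (s : ℂ) :
    conj' ((x : ℂ) ^ s) = (x : ℂ) ^ (conj' s) := by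
  have hx0 : (x : ℂ) ≠ 0 := by exact_mod_cast hx.ne'
  rw [Complex.cpow_def_of_ne_zero hx0, Complex.cpow_def_of_ne_zero hx0, ← Complex.exp_conj,
    map_mul, ← Complex.ofReal_log hx.le, Complex.conj_ofReal]

lemma hasDerivAt_cpow_shift {c x : ℝ} (hx : c < x) (s : ℂ) :
    HasDerivAt (fun r : ℝ => ((r : ℂ) - (c : ℂ)) ^ s)
      (s * ((x : ℂ) - (c : ℂ)) ^ s / ((x : ℂ) - (c : ℂ))) x := by
  have hpos : (0:ℝ) < x - c := by linarith
  have hne : ((x : ℂ) - (c : ℂ)) ≠ 0 := by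
    rw [← Complex.ofReal_sub]; exact_mod_cast hpos.ne'
  have hf : HasDerivAt (fun r : ℝ => ((r : ℂ) - (c : ℂ))) 1 x := by
    simpa using (Complex.ofRealCLM.hasDerivAt (x := x)).sub_const (c : ℂ)
  have hslit : ((x : ℂ) - (c : ℂ)) ∈ Complex.slitPlane := by
    rw [← Complex.ofReal_sub]; exact Complex.ofReal_mem_slitPlane.2 hpos
  have hlog : HasDerivAt (fun r : ℝ => Complex.log ((r : ℂ) - (c : ℂ)))
      (1 / ((x : ℂ) - (c : ℂ))) x := by simpa using hf.clog_real hslit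
  have hexp := (hlog.mul_const s).cexp
  have hev : (fun r : ℝ => Complex.exp (Complex.log ((r : ℂ) - (c : ℂ)) * s))
      =ᶠ[nhds x] (fun r : ℝ => ((r : ℂ) - (c : ℂ)) ^ s) := by
    filter_upwards [eventually_gt_nhds hx] with r hr
    have : ((r : ℂ) - (c : ℂ)) ≠ 0 := by
      rw [← Complex.ofReal_sub]; exact_mod_cast (sub_pos.2 hr).ne'
    rw [Complex.cpow_def_of_ne_zero this]
  have h2 := hexp.congr_of_eventuallyEq hev.symm
  rw [← Complex.cpow_def_of_ne_zero hne] at h2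
  exact h2.congr_deriv (by ring)

lemma hasDerivAt_cpow_pos {x : ℝ} (hx : 0 < x) (s : ℂ) :
    HasDerivAt (fun r : ℝ => (r : ℂ) ^ s) (s * (x : ℂ) ^ s / (x : ℂ)) x := by
  have := hasDerivAt_cpow_shift (c := 0) hx s
  simpa using this

end CpowHelpers

section Wronskian

lemma norm_one_of_conj_mul {p : ℂ} (h : conj' p * p = 1) : ‖p‖ = 1 := by
  have h2 : p * conj' p = 1 := by rw [mul_comm]; exact h
  rw [Complex.mul_conj] at h2
  have hn : Complex.normSq p = 1 := by exact_mod_cast h2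
  have h3 : ‖p‖ ^ 2 = 1 := by rw [Complex.sq_norm]; exact hn
  have h4 : ‖p‖ = 1 := by nlinarith [norm_nonneg p]
  simpa using h4

lemma wronskian_tendsto {l : Filter ℝ} [hl : l.NeBot]
    (u Du φp φm Dφp Dφm g : ℝ → ℂ) (ap am γ : ℂ)
    (hg : Tendsto g l (nhds γ))
    (hev : ∀ᶠ r in l, Dφp r = g r * φp r ∧ Dφm r = -(g r) * φm r ∧
        φm r = conj' (φp r) ∧ conj' (φp r) * φp r = 1 ∧
        conj' (g r) = -(g r))
    (h1 : Tendsto (fun r => u r - ap * φp r - am * φm r) l (nhds 0))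
    (h2 : Tendsto (fun r => Du r - ap * Dφp r - am * Dφm r) l (nhds 0)) :
    Tendsto (fun r => conj' (u r) * Du r - u r * conj' (Du r)) l
      (nhds (2 * γ * (conj' ap * ap - conj' am * am))) := by
  set v : ℝ → ℂ := fun r => ap * φp r + am * φm r with hv
  set w : ℝ → ℂ := fun r => ap * Dφp r + am * Dφm r with hw
  set A : ℂ := conj' ap * ap - conj' am * am with hA
  have hE : Tendsto (fun r => u r - v r) l (nhds 0) := by
    have : (fun r => u r - v r) = fun r => u r - ap * φp r - am * φm r := by
      funext r; simp only [hv]; ring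
    rw [this]; exact h1
  have hE' : Tendsto (fun r => Du r - w r) l (nhds 0) := by
    have : (fun r => Du r - w r) = fun r => Du r - ap * Dφp r - am * Dφm r := by
      funext r; simp only [hw]; ring
    rw [this]; exact h2
  have hG : ∀ᶠ r in l, conj' (v r) * w r - v r * conj' (w r) = 2 * g r * A := by
    filter_upwards [hev] with r ⟨e1, e2, e3, e4, e5⟩
    simp only [hv, hw, hA, e1, e2, e3, map_add, map_mul, map_neg, Complex.conj_conj, e5]
    linear_combination (2 * g r * (conj' ap * ap - conj' am * am)) * e4
  have hGlim : Tendsto (fun r => conj' (v r) * w r - v r * conj' (w r)) l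
      (nhds (2 * γ * A)) := by
    have : Tendsto (fun r => 2 * g r * A) l (nhds (2 * γ * A)) :=
      ((hg.const_mul 2).mul_const A)
    exact this.congr' (by filter_upwards [hG] with r h; exact h.symm)
  have hφpB : ∀ᶠ r in l, ‖φp r‖ = 1 := by
    filter_upwards [hev] with r ⟨_, _, _, e4, _⟩; exact norm_one_of_conj_mul e4
  have hφpO : φp =O[l] (fun _ => (1 : ℝ)) := by
    rw [isBigO_iff]
    exact ⟨1, by filter_upwards [hφpB] with r h; simp [h]⟩
  have hgO : g =O[l] (fun _ => (1 : ℝ)) := hg.isBigO_one ℝ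
  have hDφpO : Dφp =O[l] (fun _ => (1 : ℝ)) := by
    calc Dφp =O[l] (fun r => g r * φp r) := by
          apply Filter.EventuallyEq.isBigO
          filter_upwards [hev] with r ⟨e1, _⟩; exact e1
      _ =O[l] (fun _ : ℝ => (1 : ℝ) * 1) := hgO.mul hφpO
      _ =O[l] (fun _ : ℝ => (1 : ℝ)) := by simp [isBigO_refl]
  have hφmO : φm =O[l] (fun _ => (1 : ℝ)) := by
    rw [isBigO_iff]
    refine ⟨1, ?_⟩
    filter_upwards [hev, hφpB] with r ⟨_, _, e3, _, _⟩ hn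
    simp [e3, hn]
  have hDφmO : Dφm =O[l] (fun _ => (1 : ℝ)) := by
    calc Dφm =O[l] (fun r => -(g r) * φm r) := by
          apply Filter.EventuallyEq.isBigO
          filter_upwards [hev] with r ⟨_, e2, _⟩; exact e2
      _ =O[l] (fun _ : ℝ => (1 : ℝ) * 1) := (hgO.neg_left).mul hφmO
      _ =O[l] (fun _ : ℝ => (1 : ℝ)) := by simp [isBigO_refl]
  have hvO : v =O[l] (fun _ => (1 : ℝ)) := by
    simpa using (hφpO.const_mul_left ap).add (hφmO.const_mul_left am)
  have hwO : w =O[l] (fun _ => (1 : ℝ)) := by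
    simpa using (hDφpO.const_mul_left ap).add (hDφmO.const_mul_left am)
  have conj_tend : ∀ {f : ℝ → ℂ}, Tendsto f l (nhds 0) →
      Tendsto (fun r => conj' (f r)) l (nhds 0) := by
    intro f hf
    have := (Complex.continuous_conj.tendsto 0).comp hf
    rw [map_zero] at this
    exact this
  have conjO : ∀ {f : ℝ → ℂ}, f =O[l] (fun _ => (1:ℝ)) →
      (fun r => conj' (f r)) =O[l] (fun _ => (1:ℝ)) := by
    intro f hf
    calc (fun r => conj' (f r)) =O[l] f := by
          apply isBigO_of_le
          intro r; simp
      _ =O[l] _ := hf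
  have zmul : ∀ {f h : ℝ → ℂ}, Tendsto f l (nhds 0) → h =O[l] (fun _ => (1:ℝ)) →
      Tendsto (fun r => f r * h r) l (nhds 0) := by
    intro f h hf hh
    rw [← isLittleO_one_iff ℝ] at hf ⊢
    calc (fun r => f r * h r) =o[l] (fun _ : ℝ => (1:ℝ) * 1) := hf.mul_isBigO hh
      _ =O[l] (fun _ : ℝ => (1:ℝ)) := by simp [isBigO_refl]
  have zmul' : ∀ {f h : ℝ → ℂ}, Tendsto f l (nhds 0) → h =O[l] (fun _ => (1:ℝ)) →
      Tendsto (fun r => h r * f r) l (nhds 0) := by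
    intro f h hf hh
    have := zmul hf hh
    simpa [mul_comm] using this
  have key : ∀ r, conj' (u r) * Du r - u r * conj' (Du r)
      = (conj' (v r) * w r - v r * conj' (w r))
        + (conj' (u r - v r) * w r + conj' (v r) * (Du r - w r) + conj' (u r - v r) * (Du r - w r)
          - ((u r - v r) * conj' (w r) + v r * conj' (Du r - w r)
            + (u r - v r) * conj' (Du r - w r))) := by
    intro r
    simp only [map_sub]
    ring
  have herr : Tendsto (fun r =>
      conj' (u r - v r) * w r + conj' (v r) * (Du r - w r) + conj' (u r - v r) * (Du r - w r)
        - ((u r - v r) * conj' (w r) + v r * conj' (Du r - w r)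
          + (u r - v r) * conj' (Du r - w r)))
      l (nhds 0) := by
    have t1 := zmul (conj_tend hE) hwO
    have t2 := zmul' hE' (conjO hvO)
    have t3 := zmul (conj_tend hE) ((hE'.isBigO_one ℝ))
    have t4 := zmul hE (conjO hwO)
    have t5 := zmul' (conj_tend hE') hvO
    have t6 := zmul hE ((conj_tend hE').isBigO_one ℝ)
    have := ((t1.add t2).add t3).sub ((t4.add t5).add t6)
    simpa using this
  have := hGlim.add herr
  rw [add_zero] at this
  exact this.congr (fun r => (key r).symm)

lemma wzero_aux (cc q : ℝ) (hc : (cc : ℂ) ≠ 0) (U Up : ℂ) :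
    (conj' Up * ((cc : ℂ) * Up) + conj' U * (-(q : ℂ) * U / (cc : ℂ)))
      - (Up * conj' ((cc : ℂ) * Up) + U * conj' (-(q : ℂ) * U / (cc : ℂ))) = 0 := by
  simp only [map_mul, map_div₀, map_neg, Complex.conj_ofReal]
  field_simp
  ring

lemma wronskian_hasDerivAt_zero (M a : ℝ)
    (hpos : ∀ r, rPlus M a < r → 0 < Delta M a r ∧ 0 < r ^ 2 + a ^ 2)
    (ω m lam : ℝ)
    (u : ℝ → ℂ) (hu : ContDiffOn ℝ 2 u (Set.Ioi (rPlus M a)))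
    (hODE : ∀ r : ℝ, rPlus M a < r →
      Dstar M a (Dstar M a u) r + (((ω ^ 2 : ℝ) : ℂ) - ((V0 M a ω m lam r : ℝ) : ℂ)) * u r = 0)
    {r : ℝ} (hr : rPlus M a < r) :
    HasDerivAt (fun x => conj' (u x) * Dstar M a u x - u x * conj' (Dstar M a u x)) 0 r := by
  have hopen : IsOpen (Set.Ioi (rPlus M a)) := isOpen_Ioi
  have hmem : Set.Ioi (rPlus M a) ∈ nhds r := hopen.mem_nhds hr
  have hD := hpos r hr
  have hud : HasDerivAt u (deriv u r) r :=
    (((hu.differentiableOn (by norm_num)).differentiableAt hmem)).hasDerivAt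
  have hu2 : ContDiffOn ℝ 1 (deriv u) (Set.Ioi (rPlus M a)) :=
    hu.deriv_of_isOpen hopen (by norm_num)
  have hud2 : HasDerivAt (deriv u) (deriv (deriv u) r) r :=
    ((hu2.differentiableOn (by norm_num)).differentiableAt hmem).hasDerivAt
  set c : ℝ → ℝ := fun x => Delta M a x / (x ^ 2 + a ^ 2) with hc
  have hcd : ∀ x, rPlus M a < x → HasDerivAt c (deriv c x) x := by
    intro x hx
    have h2 := (hpos x hx).2
    have hnum : HasDerivAt (fun y : ℝ => Delta M a y)
        ((1) * (x - rMinus M a) + (x - rPlus M a) * 1) x :=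
      ((hasDerivAt_id x).sub_const (rPlus M a)).mul
        ((hasDerivAt_id x).sub_const (rMinus M a))
    have hden : HasDerivAt (fun y : ℝ => y ^ 2 + a ^ 2) (2 * x) x := by
      simpa using ((hasDerivAt_pow 2 x).add_const (a ^ 2))
    have H := hnum.div hden h2.ne'
    have H' : HasDerivAt c _ x := H
    rw [H'.deriv]; exact H'
  obtain ⟨cd, hcd⟩ : ∃ d, HasDerivAt c d r := ⟨_, hcd r hr⟩
  have hcC : HasDerivAt (fun x : ℝ => ((c x : ℝ) : ℂ)) ((cd : ℝ) : ℂ) r := hcd.ofReal_comp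
  have hDu : HasDerivAt (Dstar M a u)
      ((cd : ℂ) * deriv u r + ((c r : ℝ) : ℂ) * deriv (deriv u) r) r := by
    have heq : Dstar M a u = fun x => ((c x : ℝ) : ℂ) * deriv u x := rfl
    rw [heq]
    exact hcC.mul hud2
  generalize hD2v : (cd : ℂ) * deriv u r + ((c r : ℝ) : ℂ) * deriv (deriv u) r = D2v at hDu
  have hODEr := hODE r hr
  have hDDu : Dstar M a (Dstar M a u) r = ((c r : ℝ) : ℂ) * D2v := by
    have : deriv (Dstar M a u) r = D2v := hDu.deriv
    rw [Dstar, this]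
  have hceq : ((c r : ℝ) : ℂ) * D2v
      = -(((ω ^ 2 - V0 M a ω m lam r : ℝ)) : ℂ) * u r := by
    rw [hDDu] at hODEr
    push_cast at hODEr ⊢
    linear_combination hODEr
  have hcne : ((c r : ℝ) : ℂ) ≠ 0 := by
    have : (0:ℝ) < c r := div_pos hD.1 hD.2
    exact_mod_cast this.ne'
  have hF : HasDerivAt (fun x => conj' (u x) * Dstar M a u x - u x * conj' (Dstar M a u x))
      ((conj' (deriv u r) * Dstar M a u r + conj' (u r) * D2v)
        - (deriv u r * conj' (Dstar M a u r) + u r * conj' D2v)) r := by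
    have h1 : HasDerivAt (fun x => conj' (u x)) (conj' (deriv u r)) r := by
      have h := hud.star
      simp only [← starRingEnd_apply] at h
      exact h
    have h2 : HasDerivAt (fun x => conj' (Dstar M a u x)) (conj' D2v) r := by
      have h := hDu.star
      simp only [← starRingEnd_apply] at h
      exact h
    exact (h1.mul hDu).sub (hud.mul h2)
  have hzero : (conj' (deriv u r) * Dstar M a u r + conj' (u r) * D2v)
      - (deriv u r * conj' (Dstar M a u r) + u r * conj' D2v) = 0 := by
    have hDur : Dstar M a u r = ((c r : ℝ) : ℂ) * deriv u r := rfl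
    have hD2 : D2v = -(((ω ^ 2 - V0 M a ω m lam r : ℝ)) : ℂ) * u r / ((c r : ℝ) : ℂ) :=
      eq_div_of_mul_eq hcne (by rw [mul_comm]; exact hceq)
    rw [hDur, hD2]
    have := wzero_aux (c r) (ω ^ 2 - V0 M a ω m lam r) hcne (u r) (deriv u r)
    push_cast at this ⊢
    linear_combination this
  rw [← hzero]
  exact hF

lemma const_of_deriv_zero_Ioi {f : ℝ → ℂ} {c : ℝ}
    (hf : ∀ r ∈ Set.Ioi c, HasDerivAt f 0 r) :
    ∀ x ∈ Set.Ioi c, ∀ y ∈ Set.Ioi c, f x = f y := by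
  have key : ∀ x ∈ Set.Ioi c, ∀ y ∈ Set.Ioi c, x ≤ y → f y = f x := by
    intro x hx y hy hxy
    have hcont : ContinuousOn f (Set.Icc x y) := by
      intro z hz
      exact ((hf z (lt_of_lt_of_le hx hz.1)).continuousAt).continuousWithinAt
    have hderiv : ∀ z ∈ Set.Ico x y, HasDerivWithinAt f 0 (Set.Ici z) z := fun z hz =>
      (hf z (lt_of_lt_of_le hx hz.1)).hasDerivWithinAt
    exact constant_of_has_deriv_right_zero hcont hderiv y (Set.right_mem_Icc.2 hxy)
  intro x hx y hy
  rcases le_total x y with h | h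
  · exact (key x hx y hy h).symm
  · exact key y hy x hx h

end Wronskian

section Models

def gInf (M a ω : ℝ) (r : ℝ) : ℂ :=
  ((Delta M a r / (r ^ 2 + a ^ 2) : ℝ) : ℂ) *
    (Complex.I * (ω : ℂ) + 2 * Complex.I * (M : ℂ) * (ω : ℂ) / (r : ℂ))

def gHsub (M a : ℝ) (ω m : ℝ) (r : ℝ) : ℂ :=
  xiParam M a (ω : ℂ) m * ((r - rMinus M a : ℝ) : ℂ) / ((r ^ 2 + a ^ 2 : ℝ) : ℂ)

def gHext (M a : ℝ) (ω m : ℝ) (r : ℝ) : ℂ :=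
  (-betaParam M a (ω : ℂ) m + 2 * Complex.I * (M : ℂ) * (ω : ℂ) * ((r : ℂ) - (M : ℂ)))
    / ((r ^ 2 + a ^ 2 : ℝ) : ℂ)

end Models

section ModelLemmas
variable {M a ω m : ℝ}

lemma psiPlus_hasDerivAt {M ω : ℝ} {x : ℝ} (hx : 0 < x) :
    HasDerivAt (psiPlus M ω)
      (Complex.I * (ω : ℂ) * Complex.exp (Complex.I * (ω : ℂ) * (x : ℂ)) *
          (x : ℂ) ^ (2 * Complex.I * (M : ℂ) * (ω : ℂ))
        + Complex.exp (Complex.I * (ω : ℂ) * (x : ℂ)) *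
          (2 * Complex.I * (M : ℂ) * (ω : ℂ) * (x : ℂ) ^ (2 * Complex.I * (M : ℂ) * (ω : ℂ))
            / (x : ℂ))) x := by
  have h1 : HasDerivAt (fun r : ℝ => Complex.exp (Complex.I * (ω : ℂ) * (r : ℂ)))
      (Complex.I * (ω : ℂ) * Complex.exp (Complex.I * (ω : ℂ) * (x : ℂ))) x := by
    have hlin : HasDerivAt (fun r : ℝ => Complex.I * (ω : ℂ) * (r : ℂ))
        (Complex.I * (ω : ℂ)) x := by
      simpa using (Complex.ofRealCLM.hasDerivAt (x := x)).const_mul (Complex.I * (ω : ℂ))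
    simpa [mul_comm] using hlin.cexp
  exact h1.mul (hasDerivAt_cpow_pos hx _)

lemma psiMinus_eq_conj {M ω : ℝ} {x : ℝ} (hx : 0 < x) :
    psiMinus M ω x = conj' (psiPlus M ω x) := by
  unfold psiPlus psiMinus
  rw [map_mul, ← Complex.exp_conj, conj_cpow_pos hx]
  simp [map_mul, map_ofNat, Complex.conj_ofReal, Complex.conj_I]

lemma conj_psiPlus_mul {M ω : ℝ} {x : ℝ} (hx : 0 < x) :
    conj' (psiPlus M ω x) * psiPlus M ω x = 1 := by
  rw [← psiMinus_eq_conj hx]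
  unfold psiPlus psiMinus
  have hx0 : (x : ℂ) ≠ 0 := by exact_mod_cast hx.ne'
  rw [show Complex.exp (-(Complex.I * (ω:ℂ) * x)) * (x:ℂ) ^ (-(2 * Complex.I * (M:ℂ) * ω)) *
      (Complex.exp (Complex.I * (ω:ℂ) * x) * (x:ℂ) ^ (2 * Complex.I * (M:ℂ) * ω))
      = (Complex.exp (-(Complex.I * (ω:ℂ) * x)) * Complex.exp (Complex.I * (ω:ℂ) * x)) *
        ((x:ℂ) ^ (-(2 * Complex.I * (M:ℂ) * ω)) * (x:ℂ) ^ (2 * Complex.I * (M:ℂ) * ω)) by ring,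
    ← Complex.exp_add, ← Complex.cpow_add _ _ hx0]
  simp

lemma dstar_psiPlus {M a ω : ℝ} {x : ℝ} (hx : 0 < x) :
    Dstar M a (psiPlus M ω) x = gInf M a ω x * psiPlus M ω x := by
  have hd := (psiPlus_hasDerivAt (M := M) (ω := ω) hx).deriv
  unfold Dstar gInf
  rw [hd]
  unfold psiPlus
  have hx0 : (x : ℂ) ≠ 0 := by exact_mod_cast hx.ne'
  field_simp

lemma dstar_psiMinus {M a ω : ℝ} {x : ℝ} (hx : 0 < x) :
    Dstar M a (psiMinus M ω) x = -(gInf M a ω x) * psiMinus M ω x := by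
  have h1 : HasDerivAt (fun r : ℝ => Complex.exp (-(Complex.I * (ω : ℂ) * (r : ℂ))))
      (-(Complex.I * (ω : ℂ)) * Complex.exp (-(Complex.I * (ω : ℂ) * (x : ℂ)))) x := by
    have hlin : HasDerivAt (fun r : ℝ => -(Complex.I * (ω : ℂ)) * (r : ℂ))
        (-(Complex.I * (ω : ℂ))) x := by
      simpa using (Complex.ofRealCLM.hasDerivAt (x := x)).const_mul (-(Complex.I * (ω : ℂ)))
    have := hlin.cexp
    simpa [neg_mul, mul_comm] using this
  have hD : HasDerivAt (psiMinus M ω)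
      (-(Complex.I * (ω : ℂ)) * Complex.exp (-(Complex.I * (ω : ℂ) * (x : ℂ))) *
          (x : ℂ) ^ (-(2 * Complex.I * (M : ℂ) * (ω : ℂ)))
        + Complex.exp (-(Complex.I * (ω : ℂ) * (x : ℂ))) *
          (-(2 * Complex.I * (M : ℂ) * (ω : ℂ)) *
            (x : ℂ) ^ (-(2 * Complex.I * (M : ℂ) * (ω : ℂ))) / (x : ℂ))) x :=
    h1.mul (hasDerivAt_cpow_pos hx _)
  have hd := hD.deriv
  unfold Dstar gInf
  rw [hd]
  unfold psiMinus
  have hx0 : (x : ℂ) ≠ 0 := by exact_mod_cast hx.ne'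
  field_simp
  ring

lemma conj_gInf {M a ω : ℝ} (x : ℝ) : conj' (gInf M a ω x) = -(gInf M a ω x) := by
  unfold gInf
  simp [map_mul, map_add, map_div₀, map_ofNat, Complex.conj_ofReal, Complex.conj_I]
  ring

lemma gInf_tendsto {M a : ℝ} (hM : 0 < M) (ha : |a| ≤ M) (ω : ℝ) :
    Tendsto (gInf M a ω) atTop (nhds (Complex.I * (ω : ℂ))) := by
  have hreal : Tendsto (fun r : ℝ => Delta M a r / (r ^ 2 + a ^ 2)) atTop (nhds 1) := by
    have hden : Tendsto (fun r : ℝ => r + a ^ 2 / r) atTop atTop := by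
      apply tendsto_atTop_mono' atTop
        (by filter_upwards [eventually_gt_atTop (0:ℝ)] with r hr
            have : 0 ≤ a ^ 2 / r := div_nonneg (sq_nonneg a) hr.le
            simp only [id_eq]
            linarith)
        tendsto_id
    have h0 : Tendsto (fun r : ℝ => (r + a ^ 2 / r)⁻¹) atTop (nhds 0) :=
      hden.inv_tendsto_atTop
    have hlim : Tendsto (fun r : ℝ => 1 - 2 * M * (r + a ^ 2 / r)⁻¹) atTop (nhds 1) := by
      have := (h0.const_mul (2 * M)).const_sub 1
      simpa using this
    apply hlim.congr'
    filter_upwards [eventually_gt_atTop (0:ℝ)] with r hr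
    have h1 : r ^ 2 + a ^ 2 > 0 := by positivity
    rw [Delta_eq hM ha]
    field_simp
    ring
  have hC : Tendsto (fun r : ℝ => ((Delta M a r / (r ^ 2 + a ^ 2) : ℝ) : ℂ)) atTop
      (nhds (1 : ℂ)) := by
    have := (Complex.continuous_ofReal.tendsto 1).comp hreal
    exact this
  have hinv : Tendsto (fun r : ℝ => ((r : ℂ))⁻¹) atTop (nhds 0) := by
    have h1 : Tendsto (fun r : ℝ => ((r⁻¹ : ℝ) : ℂ)) atTop (nhds ((0:ℝ):ℂ)) :=
      (Complex.continuous_ofReal.tendsto _).comp tendsto_inv_atTop_zero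
    simpa only [Function.comp, Complex.ofReal_inv, Complex.ofReal_zero] using h1
  have h2 : Tendsto (fun r : ℝ => Complex.I * (ω : ℂ)
      + 2 * Complex.I * (M : ℂ) * (ω : ℂ) / (r : ℂ)) atTop (nhds (Complex.I * (ω : ℂ))) := by
    have := (hinv.const_mul (2 * Complex.I * (M : ℂ) * (ω : ℂ))).const_add (Complex.I * (ω : ℂ))
    simpa [div_eq_mul_inv] using this
  unfold gInf
  have h3 := hC.mul h2
  rw [one_mul] at h3
  exact h3

lemma conj_xi (hM : 0 < M) (hsub : |a| < M) :
    conj' (xiParam M a (ω : ℂ) m) = -(xiParam M a (ω : ℂ) m) := by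
  unfold xiParam
  have h1 : ((rPlus M a : ℂ) - (rMinus M a : ℂ)) = ((rPlus M a - rMinus M a : ℝ) : ℂ) := by
    push_cast; ring
  rw [h1]
  simp only [map_div₀, map_mul, map_sub, map_neg, map_ofNat, Complex.conj_ofReal,
    Complex.conj_I]
  ring

lemma conj_gHsub (hM : 0 < M) (hsub : |a| < M) (r : ℝ) :
    conj' (gHsub M a ω m r) = -(gHsub M a ω m r) := by
  unfold gHsub
  rw [map_div₀, map_mul, conj_xi hM hsub, Complex.conj_ofReal, Complex.conj_ofReal]
  ring

lemma chiMinus_eq_conj_sub (hM : 0 < M) (hsub : |a| < M) {r : ℝ} (hr : rPlus M a < r) :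
    chiMinus M a ω m r = conj' (chiPlus M a ω m r) := by
  rw [chiPlus, chiMinus, if_pos hsub, if_pos hsub]
  have h1 : ((r : ℂ) - (rPlus M a : ℂ)) = ((r - rPlus M a : ℝ) : ℂ) := by push_cast; ring
  rw [h1, conj_cpow_pos (by linarith) _, conj_xi hM hsub]

lemma conj_chiPlus_mul_sub (hM : 0 < M) (hsub : |a| < M) {r : ℝ} (hr : rPlus M a < r) :
    conj' (chiPlus M a ω m r) * chiPlus M a ω m r = 1 := by
  rw [← chiMinus_eq_conj_sub hM hsub hr, chiPlus, chiMinus, if_pos hsub, if_pos hsub]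
  have h0 : ((r : ℂ) - (rPlus M a : ℂ)) ≠ 0 := by
    rw [show ((r : ℂ) - (rPlus M a : ℂ)) = ((r - rPlus M a : ℝ) : ℂ) by push_cast; ring]
    exact_mod_cast (sub_pos.2 hr).ne'
  rw [← Complex.cpow_add _ _ h0]
  simp

lemma dstar_chiPlus_sub (hM : 0 < M) (ha : |a| ≤ M) (hsub : |a| < M) {r : ℝ}
    (hr : rPlus M a < r) :
    Dstar M a (chiPlus M a ω m) r = gHsub M a ω m r * chiPlus M a ω m r := by
  have hd : deriv (chiPlus M a ω m) r
      = xiParam M a (ω : ℂ) m * ((r : ℂ) - (rPlus M a : ℂ)) ^ xiParam M a (ω : ℂ) m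
        / ((r : ℂ) - (rPlus M a : ℂ)) := by
    have h := hasDerivAt_cpow_shift (c := rPlus M a) hr (xiParam M a (ω : ℂ) m)
    have heq : chiPlus M a ω m
        = fun x : ℝ => ((x : ℂ) - (rPlus M a : ℂ)) ^ xiParam M a (ω : ℂ) m := by
      funext x; rw [chiPlus, if_pos hsub]
    rw [heq]
    exact h.deriv
  rw [Dstar, hd, chiPlus, if_pos hsub]
  unfold gHsub Delta
  have h0 : ((r : ℂ) - (rPlus M a : ℂ)) ≠ 0 := by
    rw [show ((r : ℂ) - (rPlus M a : ℂ)) = ((r - rPlus M a : ℝ) : ℂ) by push_cast; ring]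
    exact_mod_cast (sub_pos.2 hr).ne'
  have h2 : ((r ^ 2 + a ^ 2 : ℝ) : ℂ) ≠ 0 := by
    have : (0:ℝ) < r ^ 2 + a ^ 2 := by
      have := rPlus_pos hM ha; nlinarith
    exact_mod_cast this.ne'
  push_cast
  push_cast at h2
  field_simp

lemma dstar_chiMinus_sub (hM : 0 < M) (ha : |a| ≤ M) (hsub : |a| < M) {r : ℝ}
    (hr : rPlus M a < r) :
    Dstar M a (chiMinus M a ω m) r = -(gHsub M a ω m r) * chiMinus M a ω m r := by
  have hd : deriv (chiMinus M a ω m) r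
      = -xiParam M a (ω : ℂ) m * ((r : ℂ) - (rPlus M a : ℂ)) ^ (-xiParam M a (ω : ℂ) m)
        / ((r : ℂ) - (rPlus M a : ℂ)) := by
    have h := hasDerivAt_cpow_shift (c := rPlus M a) hr (-xiParam M a (ω : ℂ) m)
    have heq : chiMinus M a ω m
        = fun x : ℝ => ((x : ℂ) - (rPlus M a : ℂ)) ^ (-xiParam M a (ω : ℂ) m) := by
      funext x; rw [chiMinus, if_pos hsub]
    rw [heq]
    exact h.deriv
  rw [Dstar, hd, chiMinus, if_pos hsub]
  unfold gHsub Delta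
  have h0 : ((r : ℂ) - (rPlus M a : ℂ)) ≠ 0 := by
    rw [show ((r : ℂ) - (rPlus M a : ℂ)) = ((r - rPlus M a : ℝ) : ℂ) by push_cast; ring]
    exact_mod_cast (sub_pos.2 hr).ne'
  have h2 : ((r ^ 2 + a ^ 2 : ℝ) : ℂ) ≠ 0 := by
    have : (0:ℝ) < r ^ 2 + a ^ 2 := by
      have := rPlus_pos hM ha; nlinarith
    exact_mod_cast this.ne'
  push_cast
  push_cast at h2
  field_simp

lemma gHsub_tendsto (hM : 0 < M) (ha : |a| ≤ M) (hsub : |a| < M) :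
    Tendsto (gHsub M a ω m) (nhdsWithin (rPlus M a) (Set.Ioi (rPlus M a)))
      (nhds (-Complex.I * ((ω : ℂ) - (m : ℂ) * (omegaPlus M a : ℂ)))) := by
  have hval : gHsub M a ω m (rPlus M a)
      = -Complex.I * ((ω : ℂ) - (m : ℂ) * (omegaPlus M a : ℂ)) := by
    unfold gHsub xiParam
    have hne : ((rPlus M a : ℂ) - (rMinus M a : ℂ)) ≠ 0 := by
      rw [show ((rPlus M a : ℂ) - (rMinus M a : ℂ)) = ((rPlus M a - rMinus M a : ℝ) : ℂ) by
        push_cast; ring]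
      exact_mod_cast (sub_pos.2 (rMinus_lt_rPlus hM hsub)).ne'
    have h2 : ((rPlus M a ^ 2 + a ^ 2 : ℝ) : ℂ) = ((2 * M * rPlus M a : ℝ) : ℂ) := by
      exact_mod_cast congrArg Complex.ofReal (rPlus_sq hM ha)
    rw [h2]
    have h3 : ((2 * M * rPlus M a : ℝ) : ℂ) ≠ 0 := by
      have hrp := rPlus_pos hM ha
      have : (0:ℝ) < 2 * M * rPlus M a := by nlinarith
      exact_mod_cast this.ne'
    push_cast
    push_cast at hne h3
    have hM0 : (M:ℂ) ≠ 0 := by exact_mod_cast hM.ne'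
    have hr0 : (rPlus M a:ℂ) ≠ 0 := by exact_mod_cast (rPlus_pos hM ha).ne'
    field_simp
  have hcont : ContinuousAt (gHsub M a ω m) (rPlus M a) := by
    unfold gHsub
    apply ContinuousAt.div
    · exact (continuous_const.mul (Complex.continuous_ofReal.comp
        (continuous_id.sub continuous_const))).continuousAt
    · exact (Complex.continuous_ofReal.comp
        ((continuous_pow 2).add continuous_const)).continuousAt
    · have hrp := rPlus_pos hM ha
      have : (0:ℝ) < rPlus M a ^ 2 + a ^ 2 := by nlinarith
      exact_mod_cast this.ne'
  rw [← hval]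
  exact (hcont.tendsto).mono_left nhdsWithin_le_nhds

lemma conj_beta (M a : ℝ) (ω m : ℝ) :
    conj' (betaParam M a (ω : ℂ) m) = -(betaParam M a (ω : ℂ) m) := by
  unfold betaParam
  simp only [map_mul, map_sub, map_pow, map_ofNat, Complex.conj_ofReal, Complex.conj_I]
  ring

lemma conj_gHext (r : ℝ) : conj' (gHext M a ω m r) = -(gHext M a ω m r) := by
  unfold gHext
  simp only [map_div₀, map_add, map_mul, map_neg, map_sub, map_ofNat, Complex.conj_ofReal,
    Complex.conj_I, conj_beta]
  ring

lemma chiMinus_eq_conj_ext (hext : |a| = M) {r : ℝ} (hr : M < r) :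
    chiMinus M a ω m r = conj' (chiPlus M a ω m r) := by
  rw [chiPlus, chiMinus, if_neg (not_lt_ext hext), if_neg (not_lt_ext hext)]
  have h1 : ((r : ℂ) - (M : ℂ)) = ((r - M : ℝ) : ℂ) := by push_cast; ring
  rw [h1, map_mul, ← Complex.exp_conj, conj_cpow_pos (by linarith), map_div₀,
    conj_beta, Complex.conj_ofReal]
  simp only [map_mul, map_ofNat, Complex.conj_ofReal, Complex.conj_I]
  ring_nf

lemma conj_chiPlus_mul_ext (hext : |a| = M) {r : ℝ} (hr : M < r) :
    conj' (chiPlus M a ω m r) * chiPlus M a ω m r = 1 := by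
  rw [← chiMinus_eq_conj_ext hext hr, chiPlus, chiMinus, if_neg (not_lt_ext hext),
    if_neg (not_lt_ext hext)]
  have h0 : ((r : ℂ) - (M : ℂ)) ≠ 0 := by
    rw [show ((r : ℂ) - (M : ℂ)) = ((r - M : ℝ) : ℂ) by push_cast; ring]
    exact_mod_cast (sub_pos.2 hr).ne'
  rw [show Complex.exp (-betaParam M a (↑ω) m / ((r:ℂ) - M)) *
        ((r:ℂ) - M) ^ (-(2 * Complex.I * (M:ℂ) * ω)) *
        (Complex.exp (betaParam M a (↑ω) m / ((r:ℂ) - M)) *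
          ((r:ℂ) - M) ^ (2 * Complex.I * (M:ℂ) * ω))
      = (Complex.exp (-betaParam M a (↑ω) m / ((r:ℂ) - M)) *
          Complex.exp (betaParam M a (↑ω) m / ((r:ℂ) - M))) *
        (((r:ℂ) - M) ^ (-(2 * Complex.I * (M:ℂ) * ω)) *
          ((r:ℂ) - M) ^ (2 * Complex.I * (M:ℂ) * ω)) by ring,
    ← Complex.exp_add, ← Complex.cpow_add _ _ h0,
    show -betaParam M a (↑ω) m / ((r:ℂ) - M) + betaParam M a (↑ω) m / ((r:ℂ) - M) = 0 by ring]
  simp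

lemma exp_beta_hasDerivAt (hext : |a| = M) {x : ℝ} (hx : M < x) (b : ℂ) :
    HasDerivAt (fun r : ℝ => Complex.exp (b / ((r : ℂ) - (M : ℂ))))
      (Complex.exp (b / ((x : ℂ) - (M : ℂ))) * (-b / ((x : ℂ) - (M : ℂ)) ^ 2)) x := by
  have h0 : ((x : ℂ) - (M : ℂ)) ≠ 0 := by
    rw [show ((x : ℂ) - (M : ℂ)) = ((x - M : ℝ) : ℂ) by push_cast; ring]
    exact_mod_cast (sub_pos.2 hx).ne'
  have hf : HasDerivAt (fun r : ℝ => ((r : ℂ) - (M : ℂ))) 1 x := by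
    simpa using (Complex.ofRealCLM.hasDerivAt (x := x)).sub_const (M : ℂ)
  have hinv : HasDerivAt (fun r : ℝ => (((r : ℂ) - (M : ℂ)))⁻¹)
      (-1 / ((x : ℂ) - (M : ℂ)) ^ 2) x := by
    have h := HasDerivAt.comp (h₂ := fun z : ℂ => z⁻¹)
      (hh₂ := hasDerivAt_inv h0) (hh := hf) (x := x)
    have h2 : (fun z : ℂ => z⁻¹) ∘ (fun r : ℝ => ((r : ℂ) - (M : ℂ)))
        = fun r : ℝ => (((r : ℂ) - (M : ℂ)))⁻¹ := rfl
    rw [h2] at h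
    exact h.congr_deriv (by ring)
  have hb : HasDerivAt (fun r : ℝ => b * (((r : ℂ) - (M : ℂ)))⁻¹)
      (b * (-1 / ((x : ℂ) - (M : ℂ)) ^ 2)) x := hinv.const_mul b
  have hbe := hb.cexp
  have heq : (fun r : ℝ => Complex.exp (b * (((r : ℂ) - (M : ℂ)))⁻¹))
      = fun r : ℝ => Complex.exp (b / ((r : ℂ) - (M : ℂ))) := by
    funext r; rw [div_eq_mul_inv]
  rw [heq] at hbe
  convert hbe using 1
  rw [div_eq_mul_inv]
  ring

lemma dstar_chiPlus_ext (hM : 0 < M) (hext : |a| = M) {r : ℝ} (hr : M < r) :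
    Dstar M a (chiPlus M a ω m) r = gHext M a ω m r * chiPlus M a ω m r := by
  have h0 : ((r : ℂ) - (M : ℂ)) ≠ 0 := by
    rw [show ((r : ℂ) - (M : ℂ)) = ((r - M : ℝ) : ℂ) by push_cast; ring]
    exact_mod_cast (sub_pos.2 hr).ne'
  have hD : HasDerivAt (chiPlus M a ω m)
      (Complex.exp (betaParam M a (↑ω) m / ((r:ℂ) - M)) *
          (-(betaParam M a (↑ω) m) / ((r:ℂ) - M) ^ 2) *
          ((r:ℂ) - M) ^ (2 * Complex.I * (M:ℂ) * ω)
        + Complex.exp (betaParam M a (↑ω) m / ((r:ℂ) - M)) *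
          (2 * Complex.I * (M:ℂ) * (ω:ℂ) * ((r:ℂ) - M) ^ (2 * Complex.I * (M:ℂ) * ω)
            / ((r:ℂ) - M))) r := by
    have heq : chiPlus M a ω m = fun x : ℝ =>
        Complex.exp (betaParam M a (↑ω) m / ((x:ℂ) - M)) *
          ((x:ℂ) - M) ^ (2 * Complex.I * (M:ℂ) * ω) := by
      funext x; rw [chiPlus, if_neg (not_lt_ext hext)]
    rw [heq]
    exact (exp_beta_hasDerivAt hext hr _).mul (hasDerivAt_cpow_shift hr _)
  rw [Dstar, hD.deriv, chiPlus, if_neg (not_lt_ext hext)]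
  unfold gHext Delta
  rw [rPlus_ext hext, rMinus_ext hext]
  have h2 : ((r ^ 2 + a ^ 2 : ℝ) : ℂ) ≠ 0 := by
    have : (0:ℝ) < r ^ 2 + a ^ 2 := by nlinarith [asq_ext hext]
    exact_mod_cast this.ne'
  push_cast
  push_cast at h2
  field_simp

lemma dstar_chiMinus_ext (hM : 0 < M) (hext : |a| = M) {r : ℝ} (hr : M < r) :
    Dstar M a (chiMinus M a ω m) r = -(gHext M a ω m r) * chiMinus M a ω m r := by
  have h0 : ((r : ℂ) - (M : ℂ)) ≠ 0 := by
    rw [show ((r : ℂ) - (M : ℂ)) = ((r - M : ℝ) : ℂ) by push_cast; ring]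
    exact_mod_cast (sub_pos.2 hr).ne'
  have hD : HasDerivAt (chiMinus M a ω m)
      (Complex.exp (-betaParam M a (↑ω) m / ((r:ℂ) - M)) *
          (-(-betaParam M a (↑ω) m) / ((r:ℂ) - M) ^ 2) *
          ((r:ℂ) - M) ^ (-(2 * Complex.I * (M:ℂ) * ω))
        + Complex.exp (-betaParam M a (↑ω) m / ((r:ℂ) - M)) *
          (-(2 * Complex.I * (M:ℂ) * (ω:ℂ)) * ((r:ℂ) - M) ^ (-(2 * Complex.I * (M:ℂ) * ω))
            / ((r:ℂ) - M))) r := by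
    have heq : chiMinus M a ω m = fun x : ℝ =>
        Complex.exp (-betaParam M a (↑ω) m / ((x:ℂ) - M)) *
          ((x:ℂ) - M) ^ (-(2 * Complex.I * (M:ℂ) * ω)) := by
      funext x; rw [chiMinus, if_neg (not_lt_ext hext)]
    rw [heq]
    exact (exp_beta_hasDerivAt hext hr _).mul (hasDerivAt_cpow_shift hr _)
  rw [Dstar, hD.deriv, chiMinus, if_neg (not_lt_ext hext)]
  unfold gHext Delta
  rw [rPlus_ext hext, rMinus_ext hext]
  have h2 : ((r ^ 2 + a ^ 2 : ℝ) : ℂ) ≠ 0 := by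
    have : (0:ℝ) < r ^ 2 + a ^ 2 := by nlinarith [asq_ext hext]
    exact_mod_cast this.ne'
  push_cast
  push_cast at h2
  field_simp
  ring

lemma gHext_tendsto (hM : 0 < M) (hext : |a| = M) :
    Tendsto (gHext M a ω m) (nhdsWithin M (Set.Ioi M))
      (nhds (-Complex.I * ((ω : ℂ) - (m : ℂ) * (omegaPlus M a : ℂ)))) := by
  have hval : gHext M a ω m M
      = -Complex.I * ((ω : ℂ) - (m : ℂ) * (omegaPlus M a : ℂ)) := by
    unfold gHext betaParam
    have h2 : ((M ^ 2 + a ^ 2 : ℝ) : ℂ) = ((2 * M ^ 2 : ℝ) : ℂ) := by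
      exact_mod_cast congrArg Complex.ofReal
        (by nlinarith [asq_ext hext] : M ^ 2 + a ^ 2 = 2 * M ^ 2)
    rw [h2]
    have h3 : ((2 * M ^ 2 : ℝ) : ℂ) ≠ 0 := by
      have : (0:ℝ) < 2 * M ^ 2 := by positivity
      exact_mod_cast this.ne'
    push_cast
    push_cast at h3
    have hM0 : (M:ℂ) ≠ 0 := by exact_mod_cast hM.ne'
    field_simp
    ring
  have hcont : ContinuousAt (gHext M a ω m) M := by
    unfold gHext
    apply ContinuousAt.div
    · exact (continuous_const.add ((continuous_const.mul
        (Complex.continuous_ofReal.sub continuous_const)))).continuousAt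
    · exact (Complex.continuous_ofReal.comp
        ((continuous_pow 2).add continuous_const)).continuousAt
    · have : (0:ℝ) < M ^ 2 + a ^ 2 := by nlinarith [asq_ext hext]
      exact_mod_cast this.ne'
  rw [← hval]
  exact (hcont.tendsto).mono_left nhdsWithin_le_nhds

end ModelLemmas

/-- **Energy identity for the homogeneous radial ODE with spin 0** (Proposition 2.13):
for a solution `u` of `(D*)²u + (ω² − V⁰)u = 0` on `(r₊, ∞)` with the stated asymptotics
at the horizon and at infinity,
`ω²|a_{I+}|² + ω(ω − mω₊)|a_{H+}|² = ω²|a_{I−}|² + ω(ω − mω₊)|a_{H−}|²`. -/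
theorem energy_identity_spin_zero
    (M a : ℝ) (hM : 0 < M) (ha : |a| ≤ M)
    (m lam ω : ℝ) (hω : ω ≠ 0) (hthr : ω ≠ m * omegaPlus M a)
    (u : ℝ → ℂ) (hu : ContDiffOn ℝ 2 u (Set.Ioi (rPlus M a)))
    (hODE : ∀ r : ℝ, rPlus M a < r →
      Dstar M a (Dstar M a u) r + (((ω ^ 2 : ℝ) : ℂ) - ((V0 M a ω m lam r : ℝ) : ℂ)) * u r = 0)
    (aHp aHm aIp aIm : ℂ)
    (hH : Tendsto (fun r : ℝ => u r - aHp * chiPlus M a ω m r - aHm * chiMinus M a ω m r)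
      (nhdsWithin (rPlus M a) (Set.Ioi (rPlus M a))) (nhds 0))
    (hH' : Tendsto (fun r : ℝ =>
        Dstar M a u r - aHp * Dstar M a (chiPlus M a ω m) r
          - aHm * Dstar M a (chiMinus M a ω m) r)
      (nhdsWithin (rPlus M a) (Set.Ioi (rPlus M a))) (nhds 0))
    (hI : Tendsto (fun r : ℝ => u r - aIp * psiPlus M ω r - aIm * psiMinus M ω r)
      atTop (nhds 0))
    (hI' : Tendsto (fun r : ℝ =>
        Dstar M a u r - aIp * Dstar M a (psiPlus M ω) r - aIm * Dstar M a (psiMinus M ω) r)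
      atTop (nhds 0)) :
    ω ^ 2 * ‖aIp‖ ^ 2 + ω * (ω - m * omegaPlus M a) * ‖aHp‖ ^ 2
      = ω ^ 2 * ‖aIm‖ ^ 2 + ω * (ω - m * omegaPlus M a) * ‖aHm‖ ^ 2 := by
  classical
  have hrp0 : 0 < rPlus M a := rPlus_pos hM ha
  set F : ℝ → ℂ :=
    fun x => conj' (u x) * Dstar M a u x - u x * conj' (Dstar M a u x) with hF
  have hpos : ∀ r, rPlus M a < r → 0 < Delta M a r ∧ 0 < r ^ 2 + a ^ 2 :=
    fun r hr => ⟨Delta_pos hM ha hr, rsq_pos hM ha hr⟩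
  have hFd : ∀ r ∈ Set.Ioi (rPlus M a), HasDerivAt F 0 r := fun r hr =>
    wronskian_hasDerivAt_zero M a hpos ω m lam u hu hODE hr
  have hconst := const_of_deriv_zero_Ioi hFd
  have hr0 : rPlus M a + 1 ∈ Set.Ioi (rPlus M a) := by simp
  -- limit at infinity
  have hevI : ∀ᶠ r in atTop,
      Dstar M a (psiPlus M ω) r = gInf M a ω r * psiPlus M ω r ∧
      Dstar M a (psiMinus M ω) r = -(gInf M a ω r) * psiMinus M ω r ∧
      psiMinus M ω r = conj' (psiPlus M ω r) ∧
      conj' (psiPlus M ω r) * psiPlus M ω r = 1 ∧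
      conj' (gInf M a ω r) = -(gInf M a ω r) := by
    filter_upwards [eventually_gt_atTop (0:ℝ)] with r hr
    exact ⟨dstar_psiPlus hr, dstar_psiMinus hr, psiMinus_eq_conj hr,
      conj_psiPlus_mul hr, conj_gInf r⟩
  have hWI : Tendsto F atTop
      (nhds (2 * (Complex.I * (ω : ℂ)) * (conj' aIp * aIp - conj' aIm * aIm))) :=
    wronskian_tendsto u (Dstar M a u) (psiPlus M ω) (psiMinus M ω)
      (Dstar M a (psiPlus M ω)) (Dstar M a (psiMinus M ω)) (gInf M a ω)
      aIp aIm (Complex.I * (ω : ℂ)) (gInf_tendsto hM ha ω) hevI hI hI'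
  have hFI : Tendsto F atTop (nhds (F (rPlus M a + 1))) := by
    apply tendsto_const_nhds.congr'
    filter_upwards [eventually_gt_atTop (rPlus M a)] with r hr
    exact hconst _ hr0 r hr
  have hI_eq : 2 * (Complex.I * (ω : ℂ)) * (conj' aIp * aIp - conj' aIm * aIm)
      = F (rPlus M a + 1) := tendsto_nhds_unique hWI hFI
  -- limit at the horizon
  haveI : (nhdsWithin (rPlus M a) (Set.Ioi (rPlus M a))).NeBot := nhdsGT_neBot _
  have hWH : Tendsto F (nhdsWithin (rPlus M a) (Set.Ioi (rPlus M a)))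
      (nhds (2 * (-Complex.I * ((ω : ℂ) - (m : ℂ) * (omegaPlus M a : ℂ)))
        * (conj' aHp * aHp - conj' aHm * aHm))) := by
    rcases lt_or_eq_of_le ha with hsub | hext
    · have hevH : ∀ᶠ r in nhdsWithin (rPlus M a) (Set.Ioi (rPlus M a)),
          Dstar M a (chiPlus M a ω m) r = gHsub M a ω m r * chiPlus M a ω m r ∧
          Dstar M a (chiMinus M a ω m) r = -(gHsub M a ω m r) * chiMinus M a ω m r ∧
          chiMinus M a ω m r = conj' (chiPlus M a ω m r) ∧
          conj' (chiPlus M a ω m r) * chiPlus M a ω m r = 1 ∧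
          conj' (gHsub M a ω m r) = -(gHsub M a ω m r) := by
        filter_upwards [self_mem_nhdsWithin] with r hr
        exact ⟨dstar_chiPlus_sub hM ha hsub hr, dstar_chiMinus_sub hM ha hsub hr,
          chiMinus_eq_conj_sub hM hsub hr, conj_chiPlus_mul_sub hM hsub hr,
          conj_gHsub hM hsub r⟩
      exact wronskian_tendsto u (Dstar M a u) (chiPlus M a ω m) (chiMinus M a ω m)
        (Dstar M a (chiPlus M a ω m)) (Dstar M a (chiMinus M a ω m)) (gHsub M a ω m)
        aHp aHm _ (gHsub_tendsto hM ha hsub) hevH hH hH'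
    · have hrpM : rPlus M a = M := rPlus_ext hext
      rw [hrpM] at hH hH' ⊢
      have hevH : ∀ᶠ r in nhdsWithin M (Set.Ioi M),
          Dstar M a (chiPlus M a ω m) r = gHext M a ω m r * chiPlus M a ω m r ∧
          Dstar M a (chiMinus M a ω m) r = -(gHext M a ω m r) * chiMinus M a ω m r ∧
          chiMinus M a ω m r = conj' (chiPlus M a ω m r) ∧
          conj' (chiPlus M a ω m r) * chiPlus M a ω m r = 1 ∧
          conj' (gHext M a ω m r) = -(gHext M a ω m r) := by
        filter_upwards [self_mem_nhdsWithin] with r hr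
        exact ⟨dstar_chiPlus_ext hM hext hr, dstar_chiMinus_ext hM hext hr,
          chiMinus_eq_conj_ext hext hr, conj_chiPlus_mul_ext hext hr,
          conj_gHext r⟩
      exact wronskian_tendsto u (Dstar M a u) (chiPlus M a ω m) (chiMinus M a ω m)
        (Dstar M a (chiPlus M a ω m)) (Dstar M a (chiMinus M a ω m)) (gHext M a ω m)
        aHp aHm _ (gHext_tendsto hM hext) hevH hH hH'
  have hFH : Tendsto F (nhdsWithin (rPlus M a) (Set.Ioi (rPlus M a)))
      (nhds (F (rPlus M a + 1))) := by
    apply tendsto_const_nhds.congr'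
    filter_upwards [self_mem_nhdsWithin] with r hr
    exact hconst _ hr0 r hr
  have hH_eq : 2 * (-Complex.I * ((ω : ℂ) - (m : ℂ) * (omegaPlus M a : ℂ)))
      * (conj' aHp * aHp - conj' aHm * aHm) = F (rPlus M a + 1) :=
    tendsto_nhds_unique hWH hFH
  have heq := hI_eq.trans hH_eq.symm
  have habs : ∀ z : ℂ, conj' z * z = ((‖z‖ ^ 2 : ℝ) : ℂ) := fun z => by
    rw [mul_comm, Complex.mul_conj]
    norm_cast
    rw [Complex.sq_norm]
  simp only [habs] at heq
  have hC : ((2 * ω * (‖aIp‖ ^ 2 - ‖aIm‖ ^ 2) : ℝ) : ℂ) * Complex.I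
      = ((-2 * (ω - m * omegaPlus M a) *
          (‖aHp‖ ^ 2 - ‖aHm‖ ^ 2) : ℝ) : ℂ) * Complex.I := by
    push_cast
    push_cast at heq
    linear_combination heq
  have hR : (2 * ω * (‖aIp‖ ^ 2 - ‖aIm‖ ^ 2) : ℝ)
      = -2 * (ω - m * omegaPlus M a) * (‖aHp‖ ^ 2 - ‖aHm‖ ^ 2) := by
    exact_mod_cast mul_right_cancel₀ Complex.I_ne_zero hC
  linear_combination (ω / 2) * hR
end
end

section
/- Lagrange identity for the confluent Heun operator with exponential weights (subextremal case): Fix reals r₋ < r₊ and parameters s ∈ ℝ, ξ, η, γ, L ∈ ℂ, and let r₊ < A₁ < A₂. Then for all twice continuously differentiable f, h : [A₁, A₂] → ℂ, ∫_{A₁}^{A₂} (h·𝒯_r f − f·𝒯_r h)·(r−r₋)^{2η−s}(r−r₊)^{2ξ−s} e^{2γr} dr = [(h·f′ − f·h′)·(r−r₋)^{2η−s+1}(r−r₊)^{2ξ−s+1} e^{2γr}] evaluated from r = A₁ to r = A₂. -/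
/-!
Writing `𝒯 = p D² + q D + c` with `p = (r - r₊)(r - r₋)`, the weight `w` makes `𝒯` formally
symmetric: the boundary weight `P = (r - r₋)^{2η-s+1}(r - r₊)^{2ξ-s+1} e^{2γr}` equals `p w` and
has derivative `q w`. Hence `(h 𝒯f - f 𝒯h) w = (h f'' - f h'') P + (h f' - f h') P'` is the
derivative of the Wronskian times `P`, and the identity is the fundamental theorem of calculus.
-/

open Real Complex Filter Set MeasureTheory

noncomputable section

theorem hasDerivWithinAt_wronskian {f f' h h' : ℝ → ℂ} {f'' h'' : ℂ} {s : Set ℝ} {x : ℝ}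
    (hf : HasDerivWithinAt f (f' x) s x) (hf' : HasDerivWithinAt f' f'' s x)
    (hh : HasDerivWithinAt h (h' x) s x) (hh' : HasDerivWithinAt h' h'' s x) :
    HasDerivWithinAt (fun r => h r * f' r - f r * h' r) (h x * f'' - f x * h'') s x :=
  ((hh.mul hf').sub (hf.mul hh')).congr_deriv (by ring)

section Wronskian

variable {a b : ℝ} {f f' f'' h h' h'' P P' : ℝ → ℂ}

theorem integral_wronskian_mul_deriv_eq_sub (hab : a ≤ b)
    (hf : ∀ x ∈ Icc a b, HasDerivWithinAt f (f' x) (Icc a b) x)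
    (hf' : ∀ x ∈ Icc a b, HasDerivWithinAt f' (f'' x) (Icc a b) x)
    (hh : ∀ x ∈ Icc a b, HasDerivWithinAt h (h' x) (Icc a b) x)
    (hh' : ∀ x ∈ Icc a b, HasDerivWithinAt h' (h'' x) (Icc a b) x)
    (hP : ∀ x ∈ Icc a b, HasDerivWithinAt P (P' x) (Icc a b) x)
    (hf''c : ContinuousOn f'' (Icc a b)) (hh''c : ContinuousOn h'' (Icc a b))
    (hP'c : ContinuousOn P' (Icc a b)) :
    ∫ x in a..b, ((h x * f'' x - f x * h'' x) * P x + (h x * f' x - f x * h' x) * P' x)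
      = (h b * f' b - f b * h' b) * P b - (h a * f' a - f a * h' a) * P a := by
  have hderiv : ∀ x ∈ Icc a b, HasDerivWithinAt (fun r => (h r * f' r - f r * h' r) * P r)
      ((h x * f'' x - f x * h'' x) * P x + (h x * f' x - f x * h' x) * P' x) (Icc a b) x :=
    fun x hx =>
      (hasDerivWithinAt_wronskian (hf x hx) (hf' x hx) (hh x hx) (hh' x hx)).mul (hP x hx)
  have hcont {g g' : ℝ → ℂ} (hg : ∀ x ∈ Icc a b, HasDerivWithinAt g (g' x) (Icc a b) x) :
      ContinuousOn g (Icc a b) :=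
    fun x hx => (hg x hx).continuousWithinAt
  refine intervalIntegral.integral_eq_sub_of_hasDeriv_right_of_le hab (hcont hderiv)
    (fun x hx => ((hderiv x (Ioo_subset_Icc_self hx)).hasDerivAt
      (Icc_mem_nhds hx.1 hx.2)).hasDerivWithinAt) ?_
  refine ContinuousOn.intervalIntegrable_of_Icc hab ?_
  exact (((hcont hh).mul hf''c).sub ((hcont hf).mul hh''c)).mul (hcont hP) |>.add
    ((((hcont hh).mul (hcont hf')).sub ((hcont hf).mul (hcont hh'))).mul hP'c)

end Wronskian

theorem integral_lagrange_identity {a b : ℝ} (hab : a < b) {f h p q c w P : ℝ → ℂ}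
    (hf : ContDiffOn ℝ 2 f (Icc a b)) (hh : ContDiffOn ℝ 2 h (Icc a b))
    (hP : ∀ x ∈ Icc a b, HasDerivWithinAt P (q x * w x) (Icc a b) x)
    (hPpw : ∀ x ∈ Icc a b, P x = p x * w x)
    (hqw : ContinuousOn (fun x => q x * w x) (Icc a b)) :
    ∫ x in a..b,
        (h x * (p x * derivWithin (derivWithin f (Icc a b)) (Icc a b) x
            + q x * derivWithin f (Icc a b) x + c x * f x)
          - f x * (p x * derivWithin (derivWithin h (Icc a b)) (Icc a b) x
            + q x * derivWithin h (Icc a b) x + c x * h x)) * w x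
      = (h b * derivWithin f (Icc a b) b - f b * derivWithin h (Icc a b) b) * P b
        - (h a * derivWithin f (Icc a b) a - f a * derivWithin h (Icc a b) a) * P a := by
  have hU : UniqueDiffOn ℝ (Icc a b) := uniqueDiffOn_Icc hab
  have hf' := hf.derivWithin hU (m := 1) (by norm_num)
  have hh' := hh.derivWithin hU (m := 1) (by norm_num)
  have hasDeriv {g : ℝ → ℂ} {n : WithTop ℕ∞} (hg : ContDiffOn ℝ n g (Icc a b)) (hn : n ≠ 0) :
      ∀ x ∈ Icc a b, HasDerivWithinAt g (derivWithin g (Icc a b) x) (Icc a b) x :=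
    fun x hx => (hg.differentiableOn hn x hx).hasDerivWithinAt
  rw [← integral_wronskian_mul_deriv_eq_sub hab.le (hasDeriv hf two_ne_zero)
    (hasDeriv hf' one_ne_zero) (hasDeriv hh two_ne_zero) (hasDeriv hh' one_ne_zero) hP
    (hf'.continuousOn_derivWithin hU le_rfl) (hh'.continuousOn_derivWithin hU le_rfl) hqw]
  refine intervalIntegral.integral_congr fun x hx => ?_
  rw [uIcc_of_le hab.le] at hx
  simp only [hPpw x hx]
  ring

def confluentHeunWeight (rm rp : ℝ) (α β γ : ℂ) (r : ℝ) : ℂ :=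
  ((r - rm : ℝ) : ℂ) ^ α * ((r - rp : ℝ) : ℂ) ^ β * Complex.exp (2 * γ * (r : ℂ))

section Weight

variable {rm rp x : ℝ}

theorem hasDerivAt_ofReal_sub_cpow (c : ℂ) (hx : rm < x) :
    HasDerivAt (fun r : ℝ => ((r - rm : ℝ) : ℂ) ^ c) (c * ((x - rm : ℝ) : ℂ) ^ (c - 1)) x := by
  have hslit : (x : ℂ) - rm ∈ slitPlane := mem_slitPlane_iff.2 (Or.inl (by simpa using hx))
  simpa using (((hasDerivAt_id (x : ℂ)).sub_const (rm : ℂ)).cpow_const hslit).comp_ofReal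

theorem continuousAt_ofReal_sub_cpow (c : ℂ) (hx : rm < x) :
    ContinuousAt (fun r : ℝ => ((r - rm : ℝ) : ℂ) ^ c) x :=
  (hasDerivAt_ofReal_sub_cpow c hx).continuousAt

theorem continuousAt_confluentHeunWeight (α β γ : ℂ) (hm : rm < x) (hp : rp < x) :
    ContinuousAt (confluentHeunWeight rm rp α β γ) x :=
  ((continuousAt_ofReal_sub_cpow α hm).mul (continuousAt_ofReal_sub_cpow β hp)).mul
    (by fun_prop)

theorem confluentHeunWeight_add_one (α β γ : ℂ) (hm : rm < x) (hp : rp < x) :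
    confluentHeunWeight rm rp (α + 1) (β + 1) γ x
      = (x - rp) * (x - rm) * confluentHeunWeight rm rp α β γ x := by
  have hm' : ((x - rm : ℝ) : ℂ) ≠ 0 := ofReal_ne_zero.2 (sub_pos.2 hm).ne'
  have hp' : ((x - rp : ℝ) : ℂ) ≠ 0 := ofReal_ne_zero.2 (sub_pos.2 hp).ne'
  rw [confluentHeunWeight, confluentHeunWeight, cpow_add _ _ hm', cpow_add _ _ hp', cpow_one,
    cpow_one]
  push_cast
  ring

theorem hasDerivAt_confluentHeunWeight_add_one (α β γ : ℂ) (hm : rm < x) (hp : rp < x) :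
    HasDerivAt (confluentHeunWeight rm rp (α + 1) (β + 1) γ)
      (((α + 1) * (x - rp) + (β + 1) * (x - rm) + 2 * γ * (x - rp) * (x - rm))
        * confluentHeunWeight rm rp α β γ x) x := by
  have hexp : HasDerivAt (fun r : ℝ => Complex.exp (2 * γ * r))
      (2 * γ * Complex.exp (2 * γ * x)) x := by
    simpa [mul_comm] using (((hasDerivAt_id (x : ℂ)).const_mul (2 * γ)).cexp).comp_ofReal
  have hm' : ((x - rm : ℝ) : ℂ) ≠ 0 := ofReal_ne_zero.2 (sub_pos.2 hm).ne'
  have hp' : ((x - rp : ℝ) : ℂ) ≠ 0 := ofReal_ne_zero.2 (sub_pos.2 hp).ne'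
  refine (((hasDerivAt_ofReal_sub_cpow (α + 1) hm).mul
    (hasDerivAt_ofReal_sub_cpow (β + 1) hp)).mul hexp).congr_deriv ?_
  simp only [confluentHeunWeight, add_sub_cancel_right, Pi.mul_apply]
  rw [cpow_add _ _ hm', cpow_add _ _ hp', cpow_one, cpow_one]
  push_cast
  ring

end Weight

/-- **Lagrange identity for the confluent Heun operator with exponential weights**
(subextremal case): for `r₊ < A₁ < A₂` and `f, h` twice continuously differentiable on
`[A₁, A₂]` (derivatives taken within `[A₁, A₂]`),
`∫_{A₁}^{A₂} (h·𝒯_r f − f·𝒯_r h)·(r−r₋)^{2η−s}(r−r₊)^{2ξ−s} e^{2γr} dr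
  = [(h·f′ − f·h′)·(r−r₋)^{2η−s+1}(r−r₊)^{2ξ−s+1} e^{2γr}]_{A₁}^{A₂}`. -/
theorem lagrange_identity_subextremal
    (rm rp : ℝ) (hr : rm < rp) (s : ℝ) (ξ η γ L : ℂ)
    (A₁ A₂ : ℝ) (hA₁ : rp < A₁) (hA : A₁ < A₂)
    (f h : ℝ → ℂ)
    (hf : ContDiffOn ℝ 2 f (Set.Icc A₁ A₂)) (hh : ContDiffOn ℝ 2 h (Set.Icc A₁ A₂)) :
    let D : (ℝ → ℂ) → ℝ → ℂ := fun g => derivWithin g (Set.Icc A₁ A₂)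
    let T : (ℝ → ℂ) → ℝ → ℂ := fun g r =>
      ((r : ℂ) - (rp : ℂ)) * ((r : ℂ) - (rm : ℂ)) * D (D g) r
        + ((2 * η + 1 - (s : ℂ)) * ((r : ℂ) - (rp : ℂ))
            + (2 * ξ + 1 - (s : ℂ)) * ((r : ℂ) - (rm : ℂ))
            + 2 * γ * ((r : ℂ) - (rp : ℂ)) * ((r : ℂ) - (rm : ℂ))) * D g r
        + (2 * γ * (1 - 2 * (s : ℂ)) * ((r : ℂ) - (rm : ℂ))
            + 2 * γ * (1 - (s : ℂ)) * (rm : ℂ) - 2 * (s : ℂ) - L) * g r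
    let w : ℝ → ℂ := fun r =>
      ((r - rm : ℝ) : ℂ) ^ (2 * η - (s : ℂ)) * ((r - rp : ℝ) : ℂ) ^ (2 * ξ - (s : ℂ)) *
        Complex.exp (2 * γ * (r : ℂ))
    let wb : ℝ → ℂ := fun r =>
      ((r - rm : ℝ) : ℂ) ^ (2 * η - (s : ℂ) + 1) * ((r - rp : ℝ) : ℂ) ^ (2 * ξ - (s : ℂ) + 1) *
        Complex.exp (2 * γ * (r : ℂ))
    (∫ r in A₁..A₂, (h r * T f r - f r * T h r) * w r)
      = (h A₂ * D f A₂ - f A₂ * D h A₂) * wb A₂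
        - (h A₁ * D f A₁ - f A₁ * D h A₁) * wb A₁ := by
  intro D T w wb
  have hm : ∀ x ∈ Icc A₁ A₂, rm < x := fun x hx => by linarith [hx.1]
  have hp : ∀ x ∈ Icc A₁ A₂, rp < x := fun x hx => by linarith [hx.1]
  exact integral_lagrange_identity hA hf hh (p := fun r => ((r : ℂ) - rp) * ((r : ℂ) - rm))
    (q := fun r => (2 * η + 1 - (s : ℂ)) * ((r : ℂ) - rp) + (2 * ξ + 1 - (s : ℂ)) * ((r : ℂ) - rm)
      + 2 * γ * ((r : ℂ) - rp) * ((r : ℂ) - rm))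
    (c := fun r => 2 * γ * (1 - 2 * (s : ℂ)) * ((r : ℂ) - rm) + 2 * γ * (1 - (s : ℂ)) * rm
      - 2 * (s : ℂ) - L)
    (w := confluentHeunWeight rm rp (2 * η - s) (2 * ξ - s) γ)
    (fun x hx => ((hasDerivAt_confluentHeunWeight_add_one _ _ γ (hm x hx) (hp x hx)).congr_deriv
      (by ring)).hasDerivWithinAt)
    (fun x hx => confluentHeunWeight_add_one _ _ γ (hm x hx) (hp x hx))
    (ContinuousOn.mul (by fun_prop) fun x hx =>
      (continuousAt_confluentHeunWeight _ _ γ (hm x hx) (hp x hx)).continuousWithinAt)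
end
end
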